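/- As z → 0 with z ≠ 0 (z in the punctured open unit disk), g(z) − (4/(3√3))/z tends to 2i/(3√3), where g is defined via m(z) = ((√3/2 + i/2) + 1/z)/((−√3/2 + i/2) + 1/z) and g(z) = (1 + 2·m(z)^{3/2} + m(z)³)/(m(z)³ − 1), using principal branch complex powers. In other words, the outer conformal center of the upper half of the unit disk equals 2i/(3√3). -/

import Mathlib

open Complex Filter

/-- `m(z) = ((√3/2 + i/2) + 1/z)/((−√3/2 + i/2) + 1/z)`. -/
noncomputable def mMap (z : ℂ) : ℂ :=
  (((Real.sqrt 3 / 2 : ℝ) : ℂ) + I / 2 + 1 / z) /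
    (-((Real.sqrt 3 / 2 : ℝ) : ℂ) + I / 2 + 1 / z)

/-- `g(z) = (1 + 2m(z)^{3/2} + m(z)³)/(m(z)³ − 1)` with the principal branch power. -/
noncomputable def gMap (z : ℂ) : ℂ :=
  (1 + 2 * mMap z ^ ((3 : ℂ) / 2) + mMap z ^ (3 : ℕ)) / (mMap z ^ (3 : ℕ) - 1)

/-! For `z ≠ 0`, `m(z) = (1 + αz)/(1 + βz)` with `α = e^{iπ/6}`, `β = e^{5iπ/6}`, and
`g = (S + 1)/(S - 1)` for `S = m^{3/2}`, which is analytic at `0` with `S 0 = 1`. For any such `S`,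
writing `S = 1 + z q` and `q = S'(0) + z r` (dslopes) shows
`(S + 1)/(S - 1) - 2/(S'(0) z) → 1 - S''(0)/S'(0)²`. Since `αβ = -1` and `α + β = i`, `S` solves
`(1 + iz - z²) S' = k S` with `k = 3√3/2`, so `S'(0) = k`, `S''(0) = k² - ik`, and the limit is
`i/k = 2i/(3√3)`. -/

open Topology

section Dslope

variable {𝕜 E : Type*} [NontriviallyNormedField 𝕜] [NormedAddCommGroup E] [NormedSpace 𝕜 E]
  {f : 𝕜 → E} {a : 𝕜}

theorem analyticAt_dslope_same (hf : AnalyticAt 𝕜 f a) : AnalyticAt 𝕜 (dslope f a) a :=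
  let ⟨_, hp⟩ := hf
  ⟨_, hp.has_fpower_series_dslope_fslope⟩

theorem AnalyticAt.deriv_deriv_eq_two_smul_deriv_dslope [CompleteSpace E]
    (hf : AnalyticAt 𝕜 f a) : deriv (deriv f) a = (2 : 𝕜) • deriv (dslope f a) a := by
  set q := dslope f a
  have hq : AnalyticAt 𝕜 q a := analyticAt_dslope_same hf
  have hf_eq : f = fun z => f a + (z - a) • q z :=
    funext fun z => by rw [sub_smul_dslope]; abel
  have hderiv : deriv f =ᶠ[𝓝 a] fun z => q z + (z - a) • deriv q z := by
    filter_upwards [hq.eventually_analyticAt] with z hz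
    rw [hf_eq]
    simpa [add_comm] using (((hasDerivAt_id z).sub_const a).fun_smul
      hz.differentiableAt.hasDerivAt).const_add (f a) |>.deriv
  rw [hderiv.deriv_eq]
  have := hq.differentiableAt.hasDerivAt.fun_add
    (((hasDerivAt_id' a).sub_const a).fun_smul hq.deriv.differentiableAt.hasDerivAt)
  rw [this.deriv]
  simp [two_smul]

end Dslope

section Cayley

variable {𝕜 : Type*} [NontriviallyNormedField 𝕜] [CompleteSpace 𝕜] {S : 𝕜 → 𝕜} {a : 𝕜}

theorem tendsto_add_one_div_sub_one_sub_of_analyticAt (hS : AnalyticAt 𝕜 S a) (ha : S a = 1)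
    (hS' : deriv S a ≠ 0) :
    Tendsto (fun z => (S z + 1) / (S z - 1) - 2 / (deriv S a * (z - a))) (𝓝[≠] a)
      (𝓝 (1 - deriv (deriv S) a / deriv S a ^ 2)) := by
  set q := dslope S a
  set r := dslope q a
  have hq : AnalyticAt 𝕜 q a := analyticAt_dslope_same hS
  have hqa : q a = deriv S a := dslope_same S a
  have hra : 2 * r a = deriv (deriv S) a := by
    rw [hS.deriv_deriv_eq_two_smul_deriv_dslope, smul_eq_mul]
    exact congrArg (2 * ·) (dslope_same q a)
  have hcont : ContinuousAt (fun z => 1 - 2 * r z / (q z * deriv S a)) a := by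
    have hr : ContinuousAt r a := continuousAt_dslope_same.mpr hq.differentiableAt
    exact continuousAt_const.sub ((continuousAt_const.mul hr).div
      (hq.continuousAt.mul continuousAt_const) (by rw [hqa]; exact mul_ne_zero hS' hS'))
  have hlim : Tendsto (fun z => 1 - 2 * r z / (q z * deriv S a)) (𝓝[≠] a)
      (𝓝 (1 - deriv (deriv S) a / deriv S a ^ 2)) := by
    convert hcont.tendsto.mono_left nhdsWithin_le_nhds using 2
    rw [← hra, hqa]
    ring
  refine hlim.congr' ?_
  have hq_ne : ∀ᶠ z in 𝓝[≠] a, q z ≠ 0 :=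
    nhdsWithin_le_nhds (hq.continuousAt.eventually_ne (hqa ▸ hS'))
  filter_upwards [hq_ne, self_mem_nhdsWithin] with z hqz hz
  have hz : z - a ≠ 0 := sub_ne_zero.mpr hz
  have hSz : S z = 1 + (z - a) * q z := by
    rw [← smul_eq_mul, sub_smul_dslope, ha]; ring
  have hqz' : q z = deriv S a + (z - a) * r z := by
    rw [← smul_eq_mul, sub_smul_dslope, hqa]; ring
  rw [hSz]
  field_simp
  rw [hqz']
  ring

end Cayley

lemma one_add_two_mul_add_sq_div_sq_sub_one {K : Type*} [Field K] (s : K) :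
    (1 + 2 * s + s ^ 2) / (s ^ 2 - 1) = (s + 1) / (s - 1) := by
  rcases eq_or_ne (s + 1) 0 with hs | hs
  · rw [eq_neg_of_add_eq_zero_left hs]; ring
  · rw [show 1 + 2 * s + s ^ 2 = (s + 1) * (s + 1) by ring,
      show s ^ 2 - 1 = (s - 1) * (s + 1) by ring, mul_div_mul_right _ _ hs]

namespace UpperHalfDisk

noncomputable def mobius (z : ℂ) : ℂ :=
  (1 + (√3 / 2 + I / 2) * z) / (1 + (-(√3 / 2) + I / 2) * z)

noncomputable def mPow (z : ℂ) : ℂ := mobius z ^ ((3 : ℂ) / 2)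

lemma sqrt_three_sq : (√3 : ℂ) ^ 2 = 3 := by
  rw [← ofReal_pow, Real.sq_sqrt (by norm_num)]; norm_num

lemma mMap_eq_mobius {z : ℂ} (hz : z ≠ 0) : mMap z = mobius z := by
  rw [mMap, mobius, ← mul_div_mul_right _ _ hz]
  push_cast
  congr 1 <;> field_simp <;> ring

lemma gMap_eq_of_ne_zero {z : ℂ} (hz : z ≠ 0) : gMap z = (mPow z + 1) / (mPow z - 1) := by
  rw [gMap, mMap_eq_mobius hz, ← one_add_two_mul_add_sq_div_sq_sub_one, mPow, ← cpow_nat_mul]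
  norm_num

lemma mobius_zero : mobius 0 = 1 := by simp [mobius]

lemma mPow_zero : mPow 0 = 1 := by simp [mPow, mobius_zero]

lemma analyticAt_mobius : AnalyticAt ℂ mobius 0 := by
  unfold mobius; fun_prop (disch := simp)

lemma analyticAt_mPow : AnalyticAt ℂ mPow 0 :=
  analyticAt_mobius.cpow analyticAt_const (by rw [mobius_zero]; exact one_mem_slitPlane)

lemma eventually_mobius_mem_slitPlane : ∀ᶠ z in 𝓝 0, mobius z ∈ slitPlane :=
  analyticAt_mobius.continuousAt.eventually_mem
    (isOpen_slitPlane.mem_nhds (mobius_zero ▸ one_mem_slitPlane))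

lemma hasDerivAt_mPow {z : ℂ} (hz : mobius z ∈ slitPlane) :
    HasDerivAt mPow (3 * √3 / 2 * mPow z / (1 + I * z - z ^ 2)) z := by
  have hm : mobius z ≠ 0 := slitPlane_ne_zero hz
  obtain ⟨ha, hb⟩ := div_ne_zero_iff.mp hm
  have hmob : HasDerivAt mobius (√3 / (1 + (-(√3 / 2) + I / 2) * z) ^ 2) z := by
    refine ((((hasDerivAt_id' z).const_mul (√3 / 2 + I / 2)).const_add 1).div
      (((hasDerivAt_id' z).const_mul (-(√3 / 2) + I / 2)).const_add 1) hb).congr_deriv ?_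
    ring
  refine (hmob.cpow_const (c := 3 / 2) hz).congr_deriv ?_
  have hP : 1 + I * z - z ^ 2 =
      (1 + (√3 / 2 + I / 2) * z) * (1 + (-(√3 / 2) + I / 2) * z) := by
    linear_combination (z ^ 2 / 4) * sqrt_three_sq - (z ^ 2 / 4) * I_sq
  rw [cpow_sub _ _ hm, cpow_one, mPow, hP, mobius]
  field_simp

lemma deriv_mPow_eventuallyEq :
    deriv mPow =ᶠ[𝓝 0] fun z => 3 * √3 / 2 * mPow z / (1 + I * z - z ^ 2) := by
  filter_upwards [eventually_mobius_mem_slitPlane] with z hz using (hasDerivAt_mPow hz).deriv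

lemma deriv_mPow_zero : deriv mPow 0 = 3 * √3 / 2 := by
  simp [deriv_mPow_eventuallyEq.eq_of_nhds, mPow_zero]

lemma deriv_deriv_mPow_zero : deriv (deriv mPow) 0 = (3 * √3 / 2) ^ 2 - I * (3 * √3 / 2) := by
  have hS := hasDerivAt_mPow (mobius_zero ▸ one_mem_slitPlane)
  have hP : HasDerivAt (fun z : ℂ => 1 + I * z - z ^ 2) (I - 2 * 0) 0 := by
    simpa using (((hasDerivAt_id' 0).const_mul I).const_add 1).fun_sub (hasDerivAt_pow 2 (0 : ℂ))
  rw [deriv_mPow_eventuallyEq.deriv_eq, ((hS.const_mul _).fun_div hP (by simp)).deriv]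
  simp [mPow_zero]
  ring

end UpperHalfDisk

theorem stmt_6 :
    Tendsto (fun z : ℂ => gMap z - ((4 / (3 * Real.sqrt 3) : ℝ) : ℂ) / z)
      (nhdsWithin 0 (Metric.ball (0 : ℂ) 1 \ {0}))
      (nhds (((2 / (3 * Real.sqrt 3) : ℝ) : ℂ) * I)) := by
  have hk : (3 * √3 / 2 : ℂ) ≠ 0 := by simp
  have hlim := tendsto_add_one_div_sub_one_sub_of_analyticAt
    UpperHalfDisk.analyticAt_mPow UpperHalfDisk.mPow_zero
    (UpperHalfDisk.deriv_mPow_zero ▸ hk)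
  rw [UpperHalfDisk.deriv_deriv_mPow_zero, UpperHalfDisk.deriv_mPow_zero] at hlim
  convert (hlim.mono_left (nhdsWithin_mono _ (Set.sdiff_subset_compl _ _))).congr' ?_ using 2
  · push_cast
    field_simp
    ring
  filter_upwards [self_mem_nhdsWithin] with z hz
  rw [UpperHalfDisk.gMap_eq_of_ne_zero hz.2, sub_zero]
  push_cast
  field_simp
  norm_num
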